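/- arXiv:1606.07517 — 2 statements merged into one kernel-verified Lean document; each statement's English description precedes it below -/
import Mathlib

section
/- For every finite game admitting a generalized ordinal coalitional potential (a map P from joint strategies into a set with a strict partial order such that every profitable coalitional deviation strictly increases P), every coalitional improvement path is finite; consequently, the game has a strong equilibrium. -/
/-- `s'` is a profitable deviation (of the non-empty coalition on which `s`
and `s'` differ) from `s`: every deviating player strictly improves. -/
def ProfDev {n : ℕ} {S : Fin n → Type} (p : (∀ i, S i) → Fin n → ℝ)
    (s s' : ∀ i, S i) : Prop :=
  s ≠ s' ∧ ∀ i, s i ≠ s' i → p s i < p s' i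

/-- For every finite game admitting a generalized ordinal coalitional
potential — a map `P` from joint strategies into a set with a strict partial
order `r` such that every profitable coalitional deviation strictly increases
`P` — every coalitional improvement path is finite (there is no infinite
sequence of profitable coalitional deviations); consequently, the game has a
strong equilibrium. -/
theorem generalized_c_potential_cFIP_and_strong_equilibrium {n : ℕ}
    (S : Fin n → Type) [∀ i, Fintype (S i)] [∀ i, Nonempty (S i)]
    (p : (∀ i, S i) → Fin n → ℝ)
    {A : Type} (P : (∀ i, S i) → A) (r : A → A → Prop)
    (hirr : ∀ a, ¬ r a a) (htrans : Transitive r)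
    (hpot : ∀ s s', ProfDev p s s' → r (P s) (P s')) :
    (¬ ∃ f : ℕ → (∀ i, S i), ∀ k, ProfDev p (f k) (f (k + 1))) ∧
    ∃ s : ∀ i, S i, ∀ s', ¬ ProfDev p s s' := by
  have part1 : ¬ ∃ f : ℕ → (∀ i, S i), ∀ k, ProfDev p (f k) (f (k + 1)) := by
    rintro ⟨f, hf⟩
    have chain : ∀ m k, k < m → r (P (f k)) (P (f m)) := by
      intro m
      induction m with
      | zero => intro k hk; omega
      | succ m ih =>
        intro k hk
        rcases Nat.lt_succ_iff_lt_or_eq.mp hk with h | h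
        · exact htrans (ih k h) (hpot _ _ (hf m))
        · subst h; exact hpot _ _ (hf k)
    obtain ⟨i, j, hij, heq⟩ := Finite.exists_ne_map_eq_of_infinite f
    rcases hij.lt_or_gt with h | h
    · exact hirr _ (heq ▸ chain j i h)
    · exact hirr _ (heq ▸ chain i j h)
  refine ⟨part1, ?_⟩
  by_contra h
  push_neg at h
  choose g hg using h
  exact part1 ⟨fun k => g^[k] (Classical.arbitrary _), fun k => by
    show ProfDev p (g^[k] _) (g^[k+1] _)
    rw [Function.iterate_succ_apply']; exact hg _⟩
end

section
/- If from every joint strategy of a finite game there is a finite improvement path ending in a Nash equilibrium, and every Nash equilibrium of the game is an (n−1)-equilibrium (where n is the number of players), and the social welfare weakly increases along every coalitional improvement step and strictly increases along profitable deviations of the grand coalition, then the game is coalitionally weakly acyclic and has a strong equilibrium. -/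
open Finset

/-- A single-player profitable deviation. -/
def SingleStep {n : ℕ} {S : Fin n → Type} (p : (∀ i, S i) → Fin n → ℝ)
    (s s' : ∀ i, S i) : Prop :=
  ∃ i, (∀ j, j ≠ i → s j = s' j) ∧ s i ≠ s' i ∧ p s i < p s' i

/-- A Nash equilibrium: no single player can profitably deviate. -/
def NashEq {n : ℕ} {S : Fin n → Type} (p : (∀ i, S i) → Fin n → ℝ)
    (s : ∀ i, S i) : Prop :=
  ∀ s', ¬ SingleStep p s s'

/-- A strong equilibrium: no coalition has a profitable deviation. -/
def StrongEq {n : ℕ} {S : Fin n → Type} (p : (∀ i, S i) → Fin n → ℝ)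
    (s : ∀ i, S i) : Prop :=
  ∀ s', ¬ ProfDev p s s'

/-- The social welfare: the sum of all players' payoffs. -/
def SW {n : ℕ} {S : Fin n → Type} (p : (∀ i, S i) → Fin n → ℝ)
    (s : ∀ i, S i) : ℝ :=
  ∑ i, p s i

/-!
Single-player improvement paths are coalitional ones, so every profile reaches a Nash
equilibrium `t` by a coalitional path. If `t` is not strong, a profitable deviation from it
cannot leave any player out, as `t` is an `(n - 1)`-equilibrium; so it is a deviation of the
grand coalition and strictly raises the social welfare. Since the welfare never decreases along
coalitional steps and the game is finite, this can happen only finitely often.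
-/

theorem exists_reflTransGen_of_potential {α β : Type*} [Finite α] [Preorder β]
    {r : α → α → Prop} {P : α → Prop} (φ : α → β) (hmono : ∀ a b, r a b → φ a ≤ φ b)
    (hstep : ∀ a, ∃ b, Relation.ReflTransGen r a b ∧ (P b ∨ ∃ c, r b c ∧ φ b < φ c)) (a : α) :
    ∃ b, Relation.ReflTransGen r a b ∧ P b := by
  have : IsTrans α (fun x y => φ y < φ x) := ⟨fun _ _ _ hxy hyz => hyz.trans hxy⟩
  have : Std.Irrefl (fun x y : α => φ y < φ x) := ⟨fun _ => lt_irrefl _⟩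
  have hwf : WellFounded fun x y : α => φ y < φ x := Finite.wellFounded_of_trans_of_irrefl _
  induction a using hwf.induction with
  | _ a ih =>
    obtain ⟨b, hab, hb | ⟨c, hbc, hlt⟩⟩ := hstep a
    · exact ⟨b, hab, hb⟩
    · have hab' : φ a ≤ φ b := by
        simpa only [Relation.reflTransGen_eq_self] using hab.lift φ hmono
      obtain ⟨d, hcd, hd⟩ := ih c (hab'.trans_lt hlt)
      exact ⟨d, (hab.tail hbc).trans hcd, hd⟩

theorem card_filter_le_card_sub_one_of_exists_not {ι : Type*} [Fintype ι] {q : ι → Prop}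
    [DecidablePred q] (h : ∃ i, ¬ q i) : #(univ.filter q) ≤ Fintype.card ι - 1 := by
  obtain ⟨i, hi⟩ := h
  have hlt : #(univ.filter q) < #(univ : Finset ι) :=
    card_lt_card (filter_ssubset.2 ⟨i, mem_univ i, hi⟩)
  rw [card_univ] at hlt
  omega

section Game

variable {n : ℕ} {S : Fin n → Type} {p : (∀ i, S i) → Fin n → ℝ}

theorem SingleStep.profDev {s s' : ∀ i, S i} (h : SingleStep p s s') : ProfDev p s s' := by
  obtain ⟨i, hothers, hne, hlt⟩ := h
  refine ⟨fun h => hne (congrFun h i), fun j hj => ?_⟩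
  obtain rfl | hji := eq_or_ne j i
  · exact hlt
  · exact absurd (hothers j hji) hj

theorem exists_grand_profDev_of_not_strongEq [∀ i, DecidableEq (S i)] {t : ∀ i, S i}
    (hsmall : ∀ t', ProfDev p t t' → #(univ.filter fun i => t i ≠ t' i) ≤ n - 1 → False)
    (hstrong : ¬ StrongEq p t) : ∃ t', ProfDev p t t' ∧ ∀ i, t i ≠ t' i := by
  simp only [StrongEq, not_forall, not_not] at hstrong
  obtain ⟨t', hdev⟩ := hstrong
  refine ⟨t', hdev, fun i hi => hsmall t' hdev ?_⟩
  simpa only [Fintype.card_fin] using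
    card_filter_le_card_sub_one_of_exists_not ⟨i, not_not.2 hi⟩

end Game

/-- If, in a finite game with `n` players: (1) from every joint strategy there
is a finite improvement path (single-player profitable deviations) ending in a
Nash equilibrium, (2) every Nash equilibrium is an `(n-1)`-equilibrium (no
coalition of at most `n - 1` players can profitably deviate), and (3) the
social welfare weakly increases along every coalitional improvement step and
strictly increases under profitable deviations of the grand coalition, then
the game is coalitionally weakly acyclic: from every joint strategy there is a
finite coalitional improvement path ending in a strong equilibrium; in
particular the game has a strong equilibrium. -/
theorem c_weakly_acyclic_of_nash_reachable {n : ℕ}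
    (S : Fin n → Type) [∀ i, Fintype (S i)] [∀ i, Nonempty (S i)]
    [∀ i, DecidableEq (S i)]
    (p : (∀ i, S i) → Fin n → ℝ)
    (h1 : ∀ s, ∃ t, Relation.ReflTransGen (SingleStep p) s t ∧ NashEq p t)
    (h2 : ∀ s, NashEq p s → ∀ s', ProfDev p s s' →
      (univ.filter (fun i => s i ≠ s' i)).card ≤ n - 1 → False)
    (h3 : ∀ s s', ProfDev p s s' → SW p s ≤ SW p s')
    (h4 : ∀ s s', ProfDev p s s' → (∀ i, s i ≠ s' i) → SW p s < SW p s') :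
    (∀ s, ∃ t, Relation.ReflTransGen (ProfDev p) s t ∧ StrongEq p t) ∧
    ∃ s, StrongEq p s := by
  have reach : ∀ s, ∃ t, Relation.ReflTransGen (ProfDev p) s t ∧ StrongEq p t := by
    refine exists_reflTransGen_of_potential (SW p) h3 fun s => ?_
    obtain ⟨t, hst, ht⟩ := h1 s
    refine ⟨t, Relation.ReflTransGen.mono (fun _ _ => SingleStep.profDev) _ _ hst, ?_⟩
    by_cases hstrong : StrongEq p t
    · exact .inl hstrong
    · obtain ⟨t', hdev, hgrand⟩ := exists_grand_profDev_of_not_strongEq (h2 t ht) hstrong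
      exact .inr ⟨t', hdev, h4 t t' hdev hgrand⟩
  obtain ⟨t, -, ht⟩ := reach (Classical.arbitrary _)
  exact ⟨reach, t, ht⟩
end
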